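/- arXiv:1909.11940 — 2 statements merged into one kernel-verified Lean document; each statement's English description precedes it below -/
import Mathlib

section
/- Let N' ∈ ℝ^{s×m} with ker(N') = ker(N) for N ∈ ℝ^{n×m} of rank s, let W ∈ ℝ^{d×n} (d = n-s) have rows forming a basis of the left kernel of N, and let K: Ω → ℝ^m be C¹ on open Ω ⊆ ℝⁿ. Define f(x) = N K(x) and Φ(x) = (N'K(x), Wx - T). Then for x* ∈ Ω, ker(J_f(x*)) ∩ im(N) = {0} if and only if det(J_Φ(x*)) ≠ 0. -/
/-!
The Jacobian of `Φ` stacks `N' J_K` on top of `W`, so its kernel is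
`ker (N' J_K) ∩ ker W`. Since `ker N' = ker N`, the first factor is `ker (N J_K) = ker J_f`; and
`ker W = im N`, because the rows of `W` span the left kernel of `N` and, by duality, `im N` is
exactly the set of vectors annihilated by that left kernel. Hence `J_Φ` is injective, i.e.
invertible, iff `ker J_f ∩ im N = 0`.
-/

open Matrix

namespace Matrix

variable {ι κ δ K : Type*} [Field K] [Fintype ι] [DecidableEq ι] [Fintype κ]

theorem mem_range_mulVecLin_iff (A : Matrix ι κ K) (v : ι → K) :
    v ∈ LinearMap.range A.mulVecLin ↔ ∀ w : ι → K, w ᵥ* A = 0 → w ⬝ᵥ v = 0 := by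
  rw [← Subspace.dualAnnihilator_dualCoannihilator_eq (W := LinearMap.range A.mulVecLin),
    Submodule.mem_dualCoannihilator, (dotProductEquiv K ι).symm.toEquiv.forall_congr_left]
  refine forall_congr' fun w => ?_
  simp only [LinearEquiv.toEquiv_symm, Equiv.symm_symm, LinearEquiv.coe_toEquiv,
    Submodule.mem_dualAnnihilator, LinearMap.mem_range, mulVecBilin_apply,
    dotProductEquiv_apply_apply, forall_exists_index, forall_apply_eq_imp_iff, dotProduct_mulVec,
    dotProduct_eq_zero_iff]

theorem ker_mulVecLin_eq_range_mulVecLin [Fintype δ] {W : Matrix δ ι K} {N : Matrix ι κ K}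
    (hW : ∀ w, w ᵥ* N = 0 ↔ w ∈ Submodule.span K (Set.range W)) :
    LinearMap.ker W.mulVecLin = LinearMap.range N.mulVecLin := by
  ext v
  have hdot (w : ι → K) : w ⬝ᵥ v = dotProductEquiv K ι v w := dotProduct_comm w v
  rw [mem_range_mulVecLin_iff, LinearMap.mem_ker, mulVecLin_apply]
  simp only [hW, hdot, ← LinearMap.mem_ker, ← SetLike.le_def, Submodule.span_le, funext_iff,
    mulVec, Pi.zero_apply]
  exact Set.range_subset_iff.symm

end Matrix

section Derivatives

variable {𝕜 E : Type*} [NontriviallyNormedField 𝕜] [NormedAddCommGroup E] [NormedSpace 𝕜 E]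
  {x : E}

theorem HasFDerivAt.matrix_mulVec [CompleteSpace 𝕜] {ι κ : Type*} [Fintype ι] [Fintype κ]
    {g : E → κ → 𝕜} {g' : E →L[𝕜] κ → 𝕜} (A : Matrix ι κ 𝕜) (hg : HasFDerivAt g g' x) :
    HasFDerivAt (fun y => A *ᵥ g y) (A.mulVecLin.toContinuousLinearMap ∘L g') x :=
  A.mulVecLin.toContinuousLinearMap.hasFDerivAt.comp x hg

theorem HasFDerivAt.sumElim {σ τ : Type*} [Fintype σ] [Fintype τ] {g : E → σ → 𝕜}
    {h : E → τ → 𝕜} {g' : E →L[𝕜] σ → 𝕜} {h' : E →L[𝕜] τ → 𝕜}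
    (hg : HasFDerivAt g g' x) (hh : HasFDerivAt h h' x) :
    HasFDerivAt (fun y => Sum.elim (g y) (h y))
      ((ContinuousLinearEquiv.sumPiEquivProdPi 𝕜 σ τ fun _ => 𝕜).symm.toContinuousLinearMap ∘L
        g'.prod h') x := by
  set e := ContinuousLinearEquiv.sumPiEquivProdPi 𝕜 σ τ fun _ => 𝕜
  have hfun : (fun y => Sum.elim (g y) (h y)) = e.symm ∘ fun y => (g y, h y) := by
    funext y i
    cases i <;> rfl
  rw [hfun]
  exact e.symm.hasFDerivAt.comp x (hg.prodMk hh)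

end Derivatives

theorem stmt11_general {n m s d : ℕ} (hn : s + d = n)
    (N : Matrix (Fin n) (Fin m) ℝ)
    (N' : Matrix (Fin s) (Fin m) ℝ)
    (hker : LinearMap.ker N'.mulVecLin = LinearMap.ker N.mulVecLin)
    (W : Matrix (Fin d) (Fin n) ℝ)
    (hWspan : ∀ w : Fin n → ℝ,
      w ᵥ* N = 0 ↔ w ∈ Submodule.span ℝ (Set.range fun i : Fin d => W i))
    (Ω : Set (Fin n → ℝ)) (hΩ : IsOpen Ω)
    (K : (Fin n → ℝ) → (Fin m → ℝ)) (hK : ContDiffOn ℝ 1 K Ω)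
    (T : Fin d → ℝ)
    (f : (Fin n → ℝ) → (Fin n → ℝ)) (hf : f = fun x => N *ᵥ K x)
    (Φ : (Fin n → ℝ) → (Fin s ⊕ Fin d → ℝ))
    (hΦ : Φ = fun x => Sum.elim (N' *ᵥ K x) (W *ᵥ x - T))
    (xstar : Fin n → ℝ) (hx : xstar ∈ Ω) :
    (LinearMap.ker (fderiv ℝ f xstar : (Fin n → ℝ) →ₗ[ℝ] (Fin n → ℝ)) ⊓
        LinearMap.range N.mulVecLin = ⊥) ↔
    LinearMap.det
      ((LinearEquiv.funCongrLeft ℝ ℝ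
          ((finCongr hn.symm).trans finSumFinEquiv.symm)).toLinearMap ∘ₗ
        (fderiv ℝ Φ xstar : (Fin n → ℝ) →ₗ[ℝ] (Fin s ⊕ Fin d → ℝ))) ≠ 0 := by
  have hK' : HasFDerivAt K (fderiv ℝ K xstar) xstar :=
    ((hK.contDiffAt (hΩ.mem_nhds hx)).differentiableAt one_ne_zero).hasFDerivAt
  have hW' : HasFDerivAt (fun x => W *ᵥ x - T) W.mulVecLin.toContinuousLinearMap xstar :=
    W.mulVecLin.toContinuousLinearMap.hasFDerivAt.sub_const T
  subst hf hΦ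
  rw [(hK'.matrix_mulVec N).fderiv, ((hK'.matrix_mulVec N').sumElim hW').fderiv, ne_eq,
    LinearMap.det_eq_zero_iff_ker_ne_bot, not_not, LinearEquiv.ker_comp]
  simp only [ContinuousLinearMap.toLinearMap_comp, LinearMap.coe_toContinuousLinearMap,
    ContinuousLinearEquiv.toLinearMap_toContinuousLinearMap,
    ContinuousLinearEquiv.toLinearEquiv_symm, ContinuousLinearMap.coe_prod, LinearEquiv.ker_comp,
    LinearMap.ker_prod]
  rw [LinearMap.ker_comp, LinearMap.ker_comp, hker,
    Matrix.ker_mulVecLin_eq_range_mulVecLin hWspan]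

theorem stmt11 {n m s d : ℕ} (hn : s + d = n)
    (N : Matrix (Fin n) (Fin m) ℝ) (hNrank : N.rank = s)
    (N' : Matrix (Fin s) (Fin m) ℝ)
    (hker : LinearMap.ker N'.mulVecLin = LinearMap.ker N.mulVecLin)
    (W : Matrix (Fin d) (Fin n) ℝ)
    (hWli : LinearIndependent ℝ (fun i : Fin d => W i))
    (hWspan : ∀ w : Fin n → ℝ,
      w ᵥ* N = 0 ↔ w ∈ Submodule.span ℝ (Set.range fun i : Fin d => W i))
    (Ω : Set (Fin n → ℝ)) (hΩ : IsOpen Ω)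
    (K : (Fin n → ℝ) → (Fin m → ℝ)) (hK : ContDiffOn ℝ 1 K Ω)
    (T : Fin d → ℝ)
    (f : (Fin n → ℝ) → (Fin n → ℝ)) (hf : f = fun x => N *ᵥ K x)
    (Φ : (Fin n → ℝ) → (Fin s ⊕ Fin d → ℝ))
    (hΦ : Φ = fun x => Sum.elim (N' *ᵥ K x) (W *ᵥ x - T))
    (xstar : Fin n → ℝ) (hx : xstar ∈ Ω) :
    (LinearMap.ker (fderiv ℝ f xstar : (Fin n → ℝ) →ₗ[ℝ] (Fin n → ℝ)) ⊓
        LinearMap.range N.mulVecLin = ⊥) ↔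
    LinearMap.det
      ((LinearEquiv.funCongrLeft ℝ ℝ
          ((finCongr hn.symm).trans finSumFinEquiv.symm)).toLinearMap ∘ₗ
        (fderiv ℝ Φ xstar : (Fin n → ℝ) →ₗ[ℝ] (Fin s ⊕ Fin d → ℝ))) ≠ 0 :=
  stmt11_general hn N N' hker W hWspan Ω hΩ K hK T f hf Φ hΦ xstar hx
end

section
/- Let J ∈ ℝ^{(n₁+s₂+d₂)×n} be a block matrix with row blocks [N₁D₁ - θE_O, N₁D₂], [N₂'D₁, N₂'D₂], [0, W₂], and let P ∈ ℝ^{n₁×n₁} be invertible with P N₁ = [0; N₁'] (first d₁ rows zero, remaining rows N₁') and P E_O = [W₁; A E_O]. If the matrix with row blocks [-θW₁, 0], [N₁'D₁ - θAE_O, N₁'D₂], [N₂'D₁, N₂'D₂], [0, W₂] is non-singular and θ ≠ 0, then J is non-singular (injective as a linear map). -/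
/-!
Splitting the rows of `P` along `n₁ = d₁ + s₁` into `P₁, P₂`, the matrix
`[[P₁, 0], [P₂, 0], [0, 1]]` times `J` is exactly `M`: `P N₁ = [0; N₁']` and `P E_O = [W₁; A E_O]`
turn `P₁ (N₁ D₁ - θ E_O)` into `-θ W₁`, `P₁ N₁ D₂` into `0`, and the `P₂` rows into the second
row block of `M`. Hence `M.mulVec` factors through `J.mulVec`, and injectivity passes to `J`.
-/

open Matrix

namespace Matrix

variable {R : Type*} {l m n k p q : Type*}

theorem injective_mulVec_of_injective_mul_mulVec [NonUnitalSemiring R] [Fintype m] [Fintype n]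
    {L : Matrix l m R} {J : Matrix m n R} (h : Function.Injective (L * J).mulVec) :
    Function.Injective J.mulVec := by
  refine Function.Injective.of_comp (f := L.mulVec) ?_
  simpa only [Function.comp_def, mulVec_mulVec] using h

theorem mul_fromCols_sub_smul [CommRing R] [Fintype n] [Fintype k]
    (Q : Matrix l n R) (N : Matrix n k R) (D₁ : Matrix k m R) (D₂ : Matrix k p R)
    (E : Matrix n m R) (θ : R) :
    Q * fromCols (N * D₁ - θ • E) (N * D₂) = fromCols (Q * N * D₁ - θ • (Q * E)) (Q * N * D₂) := by
  rw [mul_fromCols, Matrix.mul_sub, Matrix.mul_smul, Matrix.mul_assoc, Matrix.mul_assoc]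

theorem toRows_submatrix_symm_mul_of_mul_eq_submatrix [Semiring R] [Fintype m]
    {P : Matrix n m R} {N : Matrix m k R} {X : Matrix l k R} {Y : Matrix q k R} (e : n ≃ l ⊕ q)
    (h : P * N = (fromRows X Y).submatrix e id) :
    (P.submatrix e.symm id).toRows₁ * N = X ∧ (P.submatrix e.symm id).toRows₂ * N = Y := by
  rw [← fromRows_ext_iff, ← fromRows_mul, fromRows_toRows,
    ← submatrix_id_id N, ← submatrix_mul _ _ _ _ _ Function.bijective_id, h, submatrix_submatrix]
  simp

end Matrix

theorem stmt13_general {n₁ n₂ m s₁ s₂ d₁ d₂ : ℕ} (hdim : d₁ + s₁ = n₁) (θ : ℝ)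
    (N₁ : Matrix (Fin n₁) (Fin m) ℝ)
    (N₁' : Matrix (Fin s₁) (Fin m) ℝ)
    (N₂' : Matrix (Fin s₂) (Fin m) ℝ)
    (D₁ : Matrix (Fin m) (Fin n₁) ℝ) (D₂ : Matrix (Fin m) (Fin n₂) ℝ)
    (W₁ : Matrix (Fin d₁) (Fin n₁) ℝ) (W₂ : Matrix (Fin d₂) (Fin n₂) ℝ)
    (E_O : Matrix (Fin n₁) (Fin n₁) ℝ)
    (A : Matrix (Fin s₁) (Fin n₁) ℝ)
    (P : Matrix (Fin n₁) (Fin n₁) ℝ)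
    (hPN : P * N₁ = (Matrix.fromRows (0 : Matrix (Fin d₁) (Fin m) ℝ) N₁').submatrix
      ((finCongr hdim).symm.trans finSumFinEquiv.symm) id)
    (hPE : P * E_O = (Matrix.fromRows W₁ (A * E_O)).submatrix
      ((finCongr hdim).symm.trans finSumFinEquiv.symm) id)
    (J : Matrix (Fin n₁ ⊕ (Fin s₂ ⊕ Fin d₂)) (Fin n₁ ⊕ Fin n₂) ℝ)
    (hJ : J = Matrix.fromRows
      (Matrix.fromCols (N₁ * D₁ - θ • E_O) (N₁ * D₂))
      (Matrix.fromRows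
        (Matrix.fromCols (N₂' * D₁) (N₂' * D₂))
        (Matrix.fromCols 0 W₂)))
    (M : Matrix (Fin d₁ ⊕ (Fin s₁ ⊕ (Fin s₂ ⊕ Fin d₂))) (Fin n₁ ⊕ Fin n₂) ℝ)
    (hM : M = Matrix.fromRows
      (Matrix.fromCols (-θ • W₁) 0)
      (Matrix.fromRows
        (Matrix.fromCols (N₁' * D₁ - θ • (A * E_O)) (N₁' * D₂))
        (Matrix.fromRows
          (Matrix.fromCols (N₂' * D₁) (N₂' * D₂))
          (Matrix.fromCols 0 W₂))))
    (hMinj : Function.Injective M.mulVec) :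
    Function.Injective J.mulVec := by
  set Q := P.submatrix ((finCongr hdim).symm.trans finSumFinEquiv.symm).symm id
  obtain ⟨hN₁_top, hN₁_bot⟩ := toRows_submatrix_symm_mul_of_mul_eq_submatrix _ hPN
  obtain ⟨hE_top, hE_bot⟩ := toRows_submatrix_symm_mul_of_mul_eq_submatrix _ hPE
  have hLJ : (fromRows (fromCols Q.toRows₁ 0) (fromRows (fromCols Q.toRows₂ 0) (fromCols 0 1)) :
      Matrix _ (Fin n₁ ⊕ (Fin s₂ ⊕ Fin d₂)) ℝ) * J = M := by
    rw [hJ, hM, fromRows_mul, fromRows_mul, fromCols_mul_fromRows, fromCols_mul_fromRows,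
      fromCols_mul_fromRows, mul_fromCols_sub_smul, mul_fromCols_sub_smul,
      hN₁_top, hN₁_bot, hE_top, hE_bot]
    simp
  exact injective_mulVec_of_injective_mul_mulVec (hLJ ▸ hMinj)

theorem stmt13 {n₁ n₂ m s₁ s₂ d₁ d₂ : ℕ} (hdim : d₁ + s₁ = n₁) (θ : ℝ) (hθ : θ ≠ 0)
    (N₁ : Matrix (Fin n₁) (Fin m) ℝ)
    (N₁' : Matrix (Fin s₁) (Fin m) ℝ)
    (N₂' : Matrix (Fin s₂) (Fin m) ℝ)
    (D₁ : Matrix (Fin m) (Fin n₁) ℝ) (D₂ : Matrix (Fin m) (Fin n₂) ℝ)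
    (W₁ : Matrix (Fin d₁) (Fin n₁) ℝ) (W₂ : Matrix (Fin d₂) (Fin n₂) ℝ)
    (E_O : Matrix (Fin n₁) (Fin n₁) ℝ)
    (A : Matrix (Fin s₁) (Fin n₁) ℝ)
    (P : Matrix (Fin n₁) (Fin n₁) ℝ) (hP : IsUnit P.det)
    (hPN : P * N₁ = (Matrix.fromRows (0 : Matrix (Fin d₁) (Fin m) ℝ) N₁').submatrix
      ((finCongr hdim).symm.trans finSumFinEquiv.symm) id)
    (hPE : P * E_O = (Matrix.fromRows W₁ (A * E_O)).submatrix
      ((finCongr hdim).symm.trans finSumFinEquiv.symm) id)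
    (J : Matrix (Fin n₁ ⊕ (Fin s₂ ⊕ Fin d₂)) (Fin n₁ ⊕ Fin n₂) ℝ)
    (hJ : J = Matrix.fromRows
      (Matrix.fromCols (N₁ * D₁ - θ • E_O) (N₁ * D₂))
      (Matrix.fromRows
        (Matrix.fromCols (N₂' * D₁) (N₂' * D₂))
        (Matrix.fromCols 0 W₂)))
    (M : Matrix (Fin d₁ ⊕ (Fin s₁ ⊕ (Fin s₂ ⊕ Fin d₂))) (Fin n₁ ⊕ Fin n₂) ℝ)
    (hM : M = Matrix.fromRows
      (Matrix.fromCols (-θ • W₁) 0)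
      (Matrix.fromRows
        (Matrix.fromCols (N₁' * D₁ - θ • (A * E_O)) (N₁' * D₂))
        (Matrix.fromRows
          (Matrix.fromCols (N₂' * D₁) (N₂' * D₂))
          (Matrix.fromCols 0 W₂))))
    (hMinj : Function.Injective M.mulVec) :
    Function.Injective J.mulVec :=
  stmt13_general hdim θ N₁ N₁' N₂' D₁ D₂ W₁ W₂ E_O A P hPN hPE J hJ M hM hMinj
end
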